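/- arXiv:1407.5122 — 2 statements merged into one kernel-verified Lean document; each statement's English description precedes it below -/
import Mathlib

section
/- Let m ≥ 2 and let Δ : [1, 3m-2] → {0,1} be a 2-coloring such that Δ⁻¹(1) ∩ [1,3m-2] has more than m elements, and suppose there is no monochromatic m-subset B' with max(B') < 3m-2 and diam(B') ≥ 2m-2. Then the second-largest element of [1,3m-2] colored 1 is at most 2m-3 plus the smallest element colored 1. -/
open Finset

/-- diameter of a finite set of naturals: max - min (0 for ∅). -/
def diam (X : Finset ℕ) : ℕ := X.max.unbotD 0 - X.min.untopD 0

/-- B is monochromatic under Δ. -/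
def Mono (Δ : ℕ → Fin 2) (B : Finset ℕ) : Prop := ∃ c, ∀ x ∈ B, Δ x = c

/-- X <_p Y : every element of X precedes every element of Y. -/
def PLt (X Y : Finset ℕ) : Prop := ∀ x ∈ X, ∀ y ∈ Y, x < y

/-! If the second-largest element `x` of the set `S` of `1`-coloured points lay more than
`2m - 3` above `min S`, then `min S`, `x` and `m - 2` further points of `S` below `max S`
would form a monochromatic `m`-set avoiding `3m - 2` with diameter at least `2m - 2`. -/

namespace Finset

variable {α : Type*} [LinearOrder α]

theorem max_unbotD_eq_max' {s : Finset α} (hs : s.Nonempty) (d : α) :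
    s.max.unbotD d = s.max' hs := by
  rw [← coe_max' hs, WithBot.unbotD_coe]

theorem min_untopD_eq_min' {s : Finset α} (hs : s.Nonempty) (d : α) :
    s.min.untopD d = s.min' hs := by
  rw [← coe_min' hs, WithTop.untopD_coe]

theorem exists_card_eq_min'_mem_mem_subset_erase_max' {s : Finset α} (hs : s.Nonempty)
    {x : α} (hx : x ∈ s) (hx_ne : x ≠ s.max' hs) {m : ℕ} (hm : 2 ≤ m) (hms : m < #s) :
    ∃ B ⊆ s.erase (s.max' hs), #B = m ∧ s.min' hs ∈ B ∧ x ∈ B := by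
  have hx_lt : x < s.max' hs := lt_of_le_of_ne (s.le_max' x hx) hx_ne
  have hpair : {s.min' hs, x} ⊆ s.erase (s.max' hs) := by
    simp only [insert_subset_iff, singleton_subset_iff, mem_erase]
    exact ⟨⟨((s.min'_le x hx).trans_lt hx_lt).ne, s.min'_mem hs⟩, hx_lt.ne, hx⟩
  obtain ⟨B, hpairB, hBs, hB⟩ := exists_subsuperset_card_eq hpair
    ((card_insert_le _ _).trans (by simpa using hm))
    (by rw [card_erase_of_mem (s.max'_mem hs)]; omega)
  exact ⟨B, hBs, hB, hpairB (by simp), hpairB (by simp)⟩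

end Finset

theorem diam_eq_max'_sub_min' {B : Finset ℕ} (hB : B.Nonempty) :
    diam B = B.max' hB - B.min' hB := by
  rw [diam, max_unbotD_eq_max' hB, min_untopD_eq_min' hB]

theorem sub_le_diam {B : Finset ℕ} {a b : ℕ} (ha : a ∈ B) (hb : b ∈ B) : b - a ≤ diam B := by
  rw [diam_eq_max'_sub_min' ⟨a, ha⟩]
  exact tsub_le_tsub (B.le_max' b hb) (B.min'_le a ha)

theorem stmt8_general (m : ℕ) (Δ : ℕ → Fin 2)
    (hmany : m < ((Finset.Icc 1 (3 * m - 2)).filter (fun x => Δ x = 1)).card)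
    (h : ¬ ∃ B' : Finset ℕ, B' ⊆ Finset.Icc 1 (3 * m - 2) ∧ B'.card = m ∧ Mono Δ B' ∧
      (∀ x ∈ B', x < 3 * m - 2) ∧ 2 * m - 2 ≤ diam B') :
    ∀ x ∈ (Finset.Icc 1 (3 * m - 2)).filter (fun x => Δ x = 1),
      x ≠ ((Finset.Icc 1 (3 * m - 2)).filter (fun x => Δ x = 1)).max.unbotD 0 →
      x ≤ 2 * m - 3 + ((Finset.Icc 1 (3 * m - 2)).filter (fun x => Δ x = 1)).min.untopD 0 := by
  set S := (Icc 1 (3 * m - 2)).filter (fun x => Δ x = 1)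
  intro x hx hx_ne
  have hS : S.Nonempty := ⟨x, hx⟩
  rw [max_unbotD_eq_max' hS] at hx_ne
  rw [min_untopD_eq_min' hS]
  have hm : 2 ≤ m := by
    have := (card_filter_le _ _).trans_lt' hmany
    simp only [Nat.card_Icc] at this
    omega
  obtain ⟨B, hBS, hB, hminB, hxB⟩ :=
    exists_card_eq_min'_mem_mem_subset_erase_max' hS hx hx_ne hm hmany
  have hBS' : B ⊆ S := hBS.trans (erase_subset _ _)
  have hmax : S.max' hS ≤ 3 * m - 2 := (mem_Icc.mp (mem_filter.mp (S.max'_mem hS)).1).2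
  by_contra! hfar
  exact h ⟨B, hBS'.trans (filter_subset _ _), hB, ⟨1, fun y hy => (mem_filter.mp (hBS' hy)).2⟩,
    fun y hy => (S.lt_max'_of_mem_erase_max' hS (hBS hy)).trans_le hmax,
    by have := sub_le_diam hminB hxB; omega⟩

theorem stmt8 (m : ℕ) (hm : 2 ≤ m) (Δ : ℕ → Fin 2)
    (hmany : m < ((Finset.Icc 1 (3 * m - 2)).filter (fun x => Δ x = 1)).card)
    (h : ¬ ∃ B' : Finset ℕ, B' ⊆ Finset.Icc 1 (3 * m - 2) ∧ B'.card = m ∧ Mono Δ B' ∧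
      (∀ x ∈ B', x < 3 * m - 2) ∧ 2 * m - 2 ≤ diam B') :
    ∀ x ∈ (Finset.Icc 1 (3 * m - 2)).filter (fun x => Δ x = 1),
      x ≠ ((Finset.Icc 1 (3 * m - 2)).filter (fun x => Δ x = 1)).max.unbotD 0 →
      x ≤ 2 * m - 3 + ((Finset.Icc 1 (3 * m - 2)).filter (fun x => Δ x = 1)).min.untopD 0 :=
  stmt8_general m Δ hmany h
end

section
/- Let m ≥ 2 and let Δ : [1, 3m-2] → {0,1} be a 2-coloring. Then there exist monochromatic m-subsets A, C ⊆ [1, 3m-2] with max(A) ≤ max(C), diam(A) ≤ diam(C), and diam(A) ≤ 2m-2 ≤ diam(C), OR there exist monochromatic m-subsets D₁ <_p D₂ ⊆ [1,3m-2] with diam(D₁) = diam(D₂) = m-1. -/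
/-!
If some colour class contains an `m`-set of diameter at least `2m - 2`, pigeonhole on
`[1, 2m - 1]` gives a monochromatic `m`-set `A` there, and `A` is automatically narrower and
further to the left than `C`. Otherwise every colour class with at least `m` elements has all
its gaps below `2m - 2`, hence at most `2m - 2` elements; since the classes partition a set of
`3m - 2` points, both have at least `m` elements. Then `1` and `3m - 2` get different colours,
everything within `m` of the left end shares the colour of `1`, everything from `2m - 1` on
shares the colour of `3m - 2`, and `D₁ = [1, m]`, `D₂ = [2m - 1, 3m - 2]` work.
-/

open Finset

lemma diam_eq_max'_sub_min'_s10 {X : Finset ℕ} (h : X.Nonempty) : diam X = X.max' h - X.min' h := by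
  rw [diam, ← coe_max' h, ← coe_min' h]
  rfl

lemma sub_le_diam_s10 {X : Finset ℕ} {x y : ℕ} (hx : x ∈ X) (hy : y ∈ X) : y - x ≤ diam X := by
  rw [diam_eq_max'_sub_min'_s10 ⟨x, hx⟩]
  have := le_max' X y hy
  have := min'_le X x hx
  omega

lemma diam_le_of_subset_Icc {X : Finset ℕ} {a b : ℕ} (h : X ⊆ Icc a b) : diam X ≤ b - a := by
  rcases X.eq_empty_or_nonempty with rfl | hne
  · exact Nat.zero_le _
  rw [diam_eq_max'_sub_min'_s10 hne]
  have hmax := mem_Icc.1 (h (X.max'_mem hne))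
  have hmin := mem_Icc.1 (h (X.min'_mem hne))
  omega

lemma diam_Icc {a b : ℕ} (h : a ≤ b) : diam (Icc a b) = b - a :=
  le_antisymm (diam_le_of_subset_Icc Subset.rfl)
    (sub_le_diam_s10 (left_mem_Icc.2 h) (right_mem_Icc.2 h))

lemma diam_add_le_max' {X : Finset ℕ} {a : ℕ} (ha : ∀ x ∈ X, a ≤ x) (h : X.Nonempty) :
    diam X + a ≤ X.max' h := by
  rw [diam_eq_max'_sub_min'_s10 h]
  have := ha _ (X.min'_mem h)
  have := min'_le_max' X h
  omega

lemma card_le_of_forall_sub_lt {X : Finset ℕ} {d : ℕ} (h : ∀ x ∈ X, ∀ y ∈ X, y - x < d) :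
    X.card ≤ d := by
  rcases X.eq_empty_or_nonempty with rfl | hne
  · exact Nat.zero_le _
  have hsub : X ⊆ Ico (X.min' hne) (X.min' hne + d) := fun y hy => by
    have := min'_le X y hy
    have := h _ (X.min'_mem hne) y hy
    rw [mem_Ico]
    omega
  simpa using card_le_card hsub

lemma exists_subset_card_eq_sub_le_diam {S : Finset ℕ} {m x y : ℕ} (hx : x ∈ S) (hy : y ∈ S)
    (hm : 2 ≤ m) (hS : m ≤ S.card) : ∃ C ⊆ S, C.card = m ∧ y - x ≤ diam C := by
  have hxy : {x, y} ⊆ S := insert_subset hx (singleton_subset_iff.2 hy)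
  obtain ⟨C, hxyC, hCS, hC⟩ := exists_subsuperset_card_eq hxy (card_le_two.trans hm) hS
  exact ⟨C, hCS, hC, sub_le_diam_s10 (hxyC (by simp)) (hxyC (by simp))⟩

def colorClass (Δ : ℕ → Fin 2) (T : Finset ℕ) (c : Fin 2) : Finset ℕ := {x ∈ T | Δ x = c}

section colorClass

variable {Δ : ℕ → Fin 2} {T : Finset ℕ} {c : Fin 2} {m : ℕ}

lemma mem_colorClass {x : ℕ} : x ∈ colorClass Δ T c ↔ x ∈ T ∧ Δ x = c := mem_filter

lemma colorClass_subset : colorClass Δ T c ⊆ T := filter_subset _ _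

lemma mono_of_subset_colorClass {B : Finset ℕ} (h : B ⊆ colorClass Δ T c) : Mono Δ B :=
  ⟨c, fun _ hx => (mem_colorClass.1 (h hx)).2⟩

lemma card_colorClass_add_card_colorClass :
    (colorClass Δ T 0).card + (colorClass Δ T 1).card = T.card := by
  have := card_eq_sum_card_fiberwise (s := T) (f := Δ) (t := univ) fun _ _ => mem_univ _
  rw [Fin.sum_univ_two] at this
  exact this.symm

lemma exists_le_card_colorClass (h : 2 * (m - 1) < T.card) :
    ∃ c, m ≤ (colorClass Δ T c).card := by
  by_contra! hlt
  have := hlt 0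
  have := hlt 1
  have := card_colorClass_add_card_colorClass (Δ := Δ) (T := T)
  omega

lemma exists_mono_subset_card_eq (h : 2 * (m - 1) < T.card) :
    ∃ A ⊆ T, A.card = m ∧ Mono Δ A := by
  obtain ⟨c, hc⟩ := exists_le_card_colorClass (Δ := Δ) h
  obtain ⟨A, hA, hAcard⟩ := exists_subset_card_eq hc
  exact ⟨A, hA.trans colorClass_subset, hAcard, mono_of_subset_colorClass hA⟩

lemma sub_lt_of_mem_colorClass {d : ℕ}
    (hnarrow : ∀ C ⊆ T, C.card = m → Mono Δ C → diam C < d) (hm : 2 ≤ m)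
    (hc : m ≤ (colorClass Δ T c).card) {x y : ℕ}
    (hx : x ∈ colorClass Δ T c) (hy : y ∈ colorClass Δ T c) : y - x < d := by
  obtain ⟨C, hC, hCcard, hCdiam⟩ := exists_subset_card_eq_sub_le_diam hx hy hm hc
  exact hCdiam.trans_lt
    (hnarrow C (hC.trans colorClass_subset) hCcard (mono_of_subset_colorClass hC))

end colorClass

lemma exists_narrow_mono_of_wide (Δ : ℕ → Fin 2) {m : ℕ} (hm : 1 ≤ m) {C : Finset ℕ}
    (hC : C ⊆ Icc 1 (3 * m - 2)) (hCne : C.Nonempty) (hCdiam : 2 * m - 2 ≤ diam C) :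
    ∃ A ⊆ Icc 1 (3 * m - 2), A.card = m ∧ Mono Δ A ∧ A.max ≤ C.max ∧ diam A ≤ 2 * m - 2 := by
  obtain ⟨A, hA, hAcard, hAmono⟩ :=
    exists_mono_subset_card_eq (Δ := Δ) (T := Icc 1 (2 * m - 1)) (m := m)
      (by rw [Nat.card_Icc]; omega)
  have hCmax : 2 * m - 1 ≤ C.max' hCne := by
    have := diam_add_le_max' (fun x hx => (mem_Icc.1 (hC hx)).1) hCne
    omega
  refine ⟨A, hA.trans (Icc_subset_Icc le_rfl (by omega)), hAcard, hAmono, ?_, ?_⟩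
  · refine Finset.max_le fun a ha => ?_
    rw [← coe_max' hCne]
    exact WithBot.coe_le_coe.2 (((mem_Icc.1 (hA ha)).2).trans hCmax)
  · have := diam_le_of_subset_Icc hA
    omega

section narrow

variable {Δ : ℕ → Fin 2} {m : ℕ} (hm : 2 ≤ m)
  (hnarrow : ∀ C ⊆ Icc 1 (3 * m - 2), C.card = m → Mono Δ C → diam C < 2 * m - 2)
include hm hnarrow

lemma le_card_colorClass_of_narrow (c : Fin 2) :
    m ≤ (colorClass Δ (Icc 1 (3 * m - 2)) c).card := by
  have hsmall : ∀ c, (colorClass Δ (Icc 1 (3 * m - 2)) c).card ≤ 2 * m - 2 := fun c => by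
    by_cases hc : m ≤ (colorClass Δ (Icc 1 (3 * m - 2)) c).card
    · exact card_le_of_forall_sub_lt fun x hx y hy =>
        sub_lt_of_mem_colorClass hnarrow hm hc hx hy
    · omega
  have := hsmall 0
  have := hsmall 1
  have := card_colorClass_add_card_colorClass (Δ := Δ) (T := Icc 1 (3 * m - 2))
  rw [Nat.card_Icc] at this
  obtain rfl | rfl : c = 0 ∨ c = 1 := by omega
  all_goals omega

lemma sub_lt_of_color_eq_of_narrow {x y : ℕ} (hx : x ∈ Icc 1 (3 * m - 2))
    (hy : y ∈ Icc 1 (3 * m - 2)) (hxy : Δ x = Δ y) : y - x < 2 * m - 2 :=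
  sub_lt_of_mem_colorClass hnarrow hm (le_card_colorClass_of_narrow hm hnarrow (Δ y))
    (mem_colorClass.2 ⟨hx, hxy⟩) (mem_colorClass.2 ⟨hy, rfl⟩)

lemma mono_Icc_left_and_Icc_right_of_narrow :
    Mono Δ (Icc 1 m) ∧ Mono Δ (Icc (2 * m - 1) (3 * m - 2)) := by
  have hleft : 1 ∈ Icc 1 (3 * m - 2) := mem_Icc.2 ⟨le_rfl, by omega⟩
  have hright : 3 * m - 2 ∈ Icc 1 (3 * m - 2) := mem_Icc.2 ⟨by omega, le_rfl⟩
  have hends : Δ 1 ≠ Δ (3 * m - 2) := fun h => by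
    have := sub_lt_of_color_eq_of_narrow hm hnarrow hleft hright h
    omega
  refine ⟨⟨Δ 1, fun x hx => ?_⟩, ⟨Δ (3 * m - 2), fun x hx => ?_⟩⟩ <;> rw [mem_Icc] at hx
  · by_contra hne
    have := sub_lt_of_color_eq_of_narrow hm hnarrow (mem_Icc.2 ⟨hx.1, by omega⟩) hright
      (by omega)
    omega
  · by_contra hne
    have := sub_lt_of_color_eq_of_narrow hm hnarrow hleft (mem_Icc.2 ⟨by omega, hx.2⟩)
      (by omega)
    omega

end narrow

theorem stmt10 (m : ℕ) (hm : 2 ≤ m) (Δ : ℕ → Fin 2) :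
    (∃ A C : Finset ℕ, A ⊆ Finset.Icc 1 (3 * m - 2) ∧ C ⊆ Finset.Icc 1 (3 * m - 2) ∧
      A.card = m ∧ C.card = m ∧ Mono Δ A ∧ Mono Δ C ∧
      A.max ≤ C.max ∧ diam A ≤ diam C ∧ diam A ≤ 2 * m - 2 ∧ 2 * m - 2 ≤ diam C) ∨
    (∃ D₁ D₂ : Finset ℕ, D₁ ⊆ Finset.Icc 1 (3 * m - 2) ∧ D₂ ⊆ Finset.Icc 1 (3 * m - 2) ∧
      D₁.card = m ∧ D₂.card = m ∧ Mono Δ D₁ ∧ Mono Δ D₂ ∧ PLt D₁ D₂ ∧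
      diam D₁ = m - 1 ∧ diam D₂ = m - 1) := by
  by_cases hwide : ∃ C ⊆ Icc 1 (3 * m - 2), C.card = m ∧ Mono Δ C ∧ 2 * m - 2 ≤ diam C
  · obtain ⟨C, hC, hCcard, hCmono, hCdiam⟩ := hwide
    obtain ⟨A, hA, hAcard, hAmono, hmax, hAdiam⟩ :=
      exists_narrow_mono_of_wide Δ (by omega) hC (card_pos.1 (by omega)) hCdiam
    exact Or.inl ⟨A, C, hA, hC, hAcard, hCcard, hAmono, hCmono, hmax, hAdiam.trans hCdiam,
      hAdiam, hCdiam⟩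
  · push Not at hwide
    obtain ⟨hD₁, hD₂⟩ := mono_Icc_left_and_Icc_right_of_narrow hm hwide
    refine Or.inr ⟨Icc 1 m, Icc (2 * m - 1) (3 * m - 2), Icc_subset_Icc le_rfl (by omega),
      Icc_subset_Icc (by omega) le_rfl, by rw [Nat.card_Icc]; omega,
      by rw [Nat.card_Icc]; omega, hD₁, hD₂,
      fun x hx y hy => by simp only [mem_Icc] at hx hy; omega, diam_Icc (by omega), ?_⟩
    rw [diam_Icc (by omega)]
    omega
end
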